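/- Let c : ℤᵈ → ℂ be a bounded family of coefficients. Then the formula σ(f) = ∑_{k∈ℤᵈ} c_k f(k) (the series converging absolutely for each Schwartz f) defines a tempered distribution σ on ℝᵈ which has finite mild norm, with N(σ) ≤ (sup_k |c_k|) · sup_{t∈ℝᵈ} ∑_{k∈ℤᵈ} g₀(k − t) < ∞, and which satisfies σ(f) = 0 for every Schwartz function f whose closed support is disjoint from ℤᵈ. -/

import Mathlib

open MeasureTheory

/-- The lattice point `k ∈ ℤᵈ` viewed inside `EuclideanSpace ℝ (Fin d)`. -/
noncomputable def latt (d : ℕ) (k : Fin d → ℤ) : EuclideanSpace ℝ (Fin d) :=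
  (WithLp.equiv 2 (Fin d → ℝ)).symm fun i => (k i : ℝ)

/-- The time-frequency shifted Gaussian window `M_s T_t g₀ (x) = e^{2πi⟨s,x⟩} e^{-π‖x-t‖²}`. -/
noncomputable def mildWindow (d : ℕ) (t s x : EuclideanSpace ℝ (Fin d)) : ℂ :=
  Complex.exp (2 * (Real.pi : ℂ) * Complex.I * ((inner ℝ s x : ℝ) : ℂ)) *
    Complex.exp (-(Real.pi : ℂ) * ((‖x - t‖ : ℝ) : ℂ) ^ 2)

section helpers
open Real

lemma nat_version : Summable (fun m : ℕ => ((1:ℝ) + (m:ℝ)^2)⁻¹) := by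
  have h1 : Summable (fun m : ℕ => 2 * (1 / ((m:ℝ)+1)^2)) := by
    apply Summable.mul_left
    have := (summable_nat_add_iff (f := fun n : ℕ => 1 / (n:ℝ)^2) 1).mpr
      (summable_one_div_nat_pow.mpr one_lt_two)
    simpa using this
  refine Summable.of_nonneg_of_le (fun m => by positivity) (fun m => ?_) h1
  rw [mul_one_div, le_div_iff₀ (by positivity), inv_mul_le_iff₀ (by positivity)]
  nlinarith [sq_nonneg ((m:ℝ) - 1)]

lemma summable_inv_one_add_sq : Summable (fun n : ℤ => ((1:ℝ) + (n:ℝ)^2)⁻¹) := by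
  apply Summable.of_nat_of_neg <;> simpa using nat_version

-- Lemma A: product summability over ℤ^d
lemma sum_pi_prod_le {d : ℕ} (g : Fin d → ℤ → ℝ) (h0 : ∀ i n, 0 ≤ g i n)
    (hs : ∀ i, Summable (g i)) (F : Finset (Fin d → ℤ)) :
    ∑ k ∈ F, ∏ i, g i (k i) ≤ ∏ i, ∑' n, g i n := by
  have hsub : F ⊆ Fintype.piFinset (fun i => F.image (fun k => k i)) := by
    intro k hk
    simp only [Fintype.mem_piFinset]
    exact fun i => Finset.mem_image_of_mem _ hk
  calc ∑ k ∈ F, ∏ i, g i (k i)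
      ≤ ∑ k ∈ Fintype.piFinset (fun i => F.image (fun k => k i)), ∏ i, g i (k i) :=
        Finset.sum_le_sum_of_subset_of_nonneg hsub
          (fun k _ _ => Finset.prod_nonneg fun i _ => h0 i _)
    _ = ∏ i, ∑ n ∈ F.image (fun k => k i), g i n := (Finset.prod_univ_sum _ _).symm
    _ ≤ ∏ i, ∑' n, g i n := by
        refine Finset.prod_le_prod (fun i _ => Finset.sum_nonneg fun n _ => h0 i n)
          (fun i _ => Summable.sum_le_tsum _ (fun n _ => h0 i n) (hs i))

lemma summable_pi_prod {d : ℕ} (g : Fin d → ℤ → ℝ) (h0 : ∀ i n, 0 ≤ g i n)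
    (hs : ∀ i, Summable (g i)) :
    Summable (fun k : Fin d → ℤ => ∏ i, g i (k i)) :=
  summable_of_sum_le (fun k => Finset.prod_nonneg fun i _ => h0 i _)
    (sum_pi_prod_le g h0 hs)

lemma tsum_pi_prod_le {d : ℕ} (g : Fin d → ℤ → ℝ) (h0 : ∀ i n, 0 ≤ g i n)
    (hs : ∀ i, Summable (g i)) :
    ∑' k : Fin d → ℤ, ∏ i, g i (k i) ≤ ∏ i, ∑' n, g i n :=
  Summable.tsum_le_of_sum_le (summable_pi_prod g h0 hs) (sum_pi_prod_le g h0 hs)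

-- 1-d Gaussian
lemma gauss_term_le (a : ℝ) (n : ℤ) :
    Real.exp (-Real.pi * ((n:ℝ) - a)^2) ≤ Real.exp (Real.pi * a^2) * ((1:ℝ) + (n:ℝ)^2)⁻¹ := by
  have h1 : Real.exp (-Real.pi * ((n:ℝ) - a)^2) ≤ Real.exp (Real.pi * a^2) * Real.exp (-(n:ℝ)^2) := by
    rw [← Real.exp_add]
    apply Real.exp_le_exp.mpr
    nlinarith [Real.pi_gt_three, sq_nonneg ((n:ℝ) - 2*a), sq_nonneg ((n:ℝ) - a), sq_nonneg (n:ℝ)]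
  refine h1.trans (mul_le_mul_of_nonneg_left ?_ (Real.exp_nonneg _))
  rw [Real.exp_neg]
  apply inv_anti₀ (by positivity)
  exact Real.add_one_le_exp _ |>.trans_eq' (by ring)

lemma summable_gauss (a : ℝ) :
    Summable (fun n : ℤ => Real.exp (-Real.pi * ((n:ℝ) - a)^2)) := by
  refine Summable.of_nonneg_of_le (fun n => Real.exp_nonneg _) (gauss_term_le a)
    (summable_inv_one_add_sq.mul_left _)

noncomputable def C1 : ℝ := Real.exp (Real.pi / 4) * ∑' n : ℤ, ((1:ℝ) + (n:ℝ)^2)⁻¹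

lemma tsum_gauss_le (a : ℝ) :
    ∑' n : ℤ, Real.exp (-Real.pi * ((n:ℝ) - a)^2) ≤ C1 := by
  set m := round a with hm
  have key : ∑' n : ℤ, Real.exp (-Real.pi * ((n:ℝ) - a)^2)
      = ∑' j : ℤ, Real.exp (-Real.pi * ((j:ℝ) - (a - m))^2) := by
    rw [← (Equiv.addRight m).tsum_eq (fun n : ℤ => Real.exp (-Real.pi * ((n:ℝ) - a)^2))]
    congr 1; funext j
    have : (((j + m : ℤ)):ℝ) = (j:ℝ) + (m:ℝ) := by push_cast; ring
    simp only [Equiv.coe_addRight, this]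
    ring_nf
  rw [key]
  have hb : |a - m| ≤ 1/2 := abs_sub_round a
  have hb2 : (a - m)^2 ≤ 1/4 := by
    have := sq_le_sq' (neg_le_of_abs_le hb |>.trans_eq' (by norm_num)) (le_of_abs_le hb)
    linarith [this]
  calc ∑' j : ℤ, Real.exp (-Real.pi * ((j:ℝ) - (a - m))^2)
      ≤ ∑' j : ℤ, Real.exp (Real.pi * (a-m)^2) * ((1:ℝ) + (j:ℝ)^2)⁻¹ := by
        exact Summable.tsum_le_tsum (gauss_term_le (a - m)) (summable_gauss _)
          (summable_inv_one_add_sq.mul_left _)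
    _ = Real.exp (Real.pi * (a-m)^2) * ∑' j : ℤ, ((1:ℝ) + (j:ℝ)^2)⁻¹ := tsum_mul_left
    _ ≤ C1 := by
        unfold C1
        apply mul_le_mul_of_nonneg_right _ (tsum_nonneg fun n => by positivity)
        apply Real.exp_le_exp.mpr
        nlinarith [Real.pi_pos]

lemma gaussE_eq (d : ℕ) (t : EuclideanSpace ℝ (Fin d)) (k : Fin d → ℤ) :
    Real.exp (-Real.pi * ‖latt d k - t‖ ^ 2)
      = ∏ i, Real.exp (-Real.pi * (((k i):ℝ) - t i)^2) := by
  have hn : ‖latt d k - t‖ ^ 2 = ∑ i, (((k i):ℝ) - t i) ^ 2 := by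
    rw [EuclideanSpace.norm_eq, Real.sq_sqrt (by positivity)]
    simp only [Real.norm_eq_abs, sq_abs]
    rfl
  rw [hn, Finset.mul_sum, Real.exp_sum]

lemma summable_gaussE (d : ℕ) (t : EuclideanSpace ℝ (Fin d)) :
    Summable (fun k : Fin d → ℤ => Real.exp (-Real.pi * ‖latt d k - t‖ ^ 2)) := by
  have := summable_pi_prod (fun i n => Real.exp (-Real.pi * ((n:ℝ) - t i)^2))
    (fun i n => Real.exp_nonneg _) (fun i => summable_gauss (t i))
  refine this.congr fun k => (gaussE_eq d t k).symm

lemma tsum_gaussE_le (d : ℕ) (t : EuclideanSpace ℝ (Fin d)) :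
    (∑' k : Fin d → ℤ, Real.exp (-Real.pi * ‖latt d k - t‖ ^ 2)) ≤ C1 ^ d := by
  calc (∑' k : Fin d → ℤ, Real.exp (-Real.pi * ‖latt d k - t‖ ^ 2))
      = ∑' k : Fin d → ℤ, ∏ i, Real.exp (-Real.pi * (((k i):ℝ) - t i)^2) := by
        exact tsum_congr (gaussE_eq d t)
    _ ≤ ∏ i : Fin d, ∑' n : ℤ, Real.exp (-Real.pi * ((n:ℝ) - t i)^2) :=
        tsum_pi_prod_le (fun i n => Real.exp (-Real.pi * ((n:ℝ) - t i)^2))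
          (fun i n => Real.exp_nonneg _) (fun i => summable_gauss (t i))
    _ ≤ ∏ i : Fin d, C1 := by
        refine Finset.prod_le_prod (fun i _ => tsum_nonneg fun n => Real.exp_nonneg _)
          (fun i _ => tsum_gauss_le (t i))
    _ = C1 ^ d := by simp

-- Schwartz decay
lemma schwartz_decay (d : ℕ) (f : SchwartzMap (EuclideanSpace ℝ (Fin d)) ℂ)
    (x : EuclideanSpace ℝ (Fin d)) :
    ‖f x‖ ≤ (2 ^ (2*d) * (Finset.Iic (2*d, 0)).sup
        (schwartzSeminormFamily ℂ (EuclideanSpace ℝ (Fin d)) ℂ) f)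
      * ∏ i, ((1:ℝ) + (x i)^2)⁻¹ := by
  have hprodpos : (0:ℝ) < ∏ i, ((1:ℝ) + (x i)^2) := Finset.prod_pos fun i _ => by positivity
  rw [Finset.prod_inv_distrib, ← div_eq_mul_inv, le_div_iff₀ hprodpos]
  have hcoord : ∀ i, (x i)^2 ≤ ‖x‖^2 := by
    intro i
    rw [EuclideanSpace.norm_eq, Real.sq_sqrt (by positivity)]
    calc (x i)^2 = |x i|^2 := (sq_abs _).symm
      _ ≤ ∑ j, |x j|^2 := Finset.single_le_sum (f := fun j => |x j|^2) (fun j _ => by positivity) (Finset.mem_univ i)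
      _ = ∑ j, ‖x j‖^2 := by simp [Real.norm_eq_abs]
  have hprod : ∏ i, ((1:ℝ) + (x i)^2) ≤ (1 + ‖x‖)^(2*d) := by
    calc ∏ i, ((1:ℝ) + (x i)^2) ≤ ∏ _i : Fin d, (1 + ‖x‖)^2 := by
          refine Finset.prod_le_prod (fun i _ => by positivity) (fun i _ => ?_)
          nlinarith [hcoord i, norm_nonneg x]
      _ = (1 + ‖x‖)^(2*d) := by rw [Finset.prod_const, ← pow_mul, Finset.card_univ,
          Fintype.card_fin, mul_comm]
  calc ‖f x‖ * ∏ i, ((1:ℝ) + (x i)^2) ≤ ‖f x‖ * (1 + ‖x‖)^(2*d) := by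
        exact mul_le_mul_of_nonneg_left hprod (norm_nonneg _)
    _ = (1 + ‖x‖)^(2*d) * ‖iteratedFDeriv ℝ 0 (⇑f) x‖ := by
        rw [norm_iteratedFDeriv_zero, mul_comm]
    _ ≤ 2 ^ (2*d) * (Finset.Iic (2*d, 0)).sup
          (schwartzSeminormFamily ℂ (EuclideanSpace ℝ (Fin d)) ℂ) f :=
        SchwartzMap.one_add_le_sup_seminorm_apply (m := (2*d, 0)) le_rfl le_rfl f x

lemma norm_mildWindow (d : ℕ) (t s x : EuclideanSpace ℝ (Fin d)) :
    ‖mildWindow d t s x‖ = Real.exp (-Real.pi * ‖x - t‖ ^ 2) := by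
  unfold mildWindow
  rw [norm_mul, Complex.norm_exp, Complex.norm_exp]
  have h1 : (2 * (Real.pi:ℂ) * Complex.I * ((inner ℝ s x : ℝ):ℂ)).re = 0 := by
    simp [Complex.mul_re, Complex.mul_im]
  have h2 : (-(Real.pi:ℂ) * ((‖x - t‖:ℝ):ℂ) ^ 2).re = -Real.pi * ‖x - t‖ ^ 2 := by
    have : (-(Real.pi:ℂ) * ((‖x - t‖:ℝ):ℂ) ^ 2) = ((-Real.pi * ‖x - t‖ ^ 2 : ℝ) : ℂ) := by
      push_cast; ring
    rw [this, Complex.ofReal_re]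
  rw [h1, h2, Real.exp_zero, one_mul]

end helpers

/-- A bounded family `c : ℤᵈ → ℂ` defines, via `σ(f) = ∑_{k∈ℤᵈ} c_k f(k)` (absolutely
convergent for each Schwartz `f`), a tempered distribution of finite mild norm, with
`N(σ) ≤ (sup_k |c_k|) · sup_t ∑_k g₀(k - t) < ∞`, which vanishes on every Schwartz
function whose closed support is disjoint from `ℤᵈ`. -/
theorem dirac_comb_is_mild_distribution (d : ℕ) (c : (Fin d → ℤ) → ℂ)
    (M : ℝ) (hc : ∀ k, ‖c k‖ ≤ M)
    (G : EuclideanSpace ℝ (Fin d) → EuclideanSpace ℝ (Fin d) →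
      SchwartzMap (EuclideanSpace ℝ (Fin d)) ℂ)
    (hG : ∀ t s x, G t s x = mildWindow d t s x) :
    ∃ σ : SchwartzMap (EuclideanSpace ℝ (Fin d)) ℂ →L[ℂ] ℂ,
      (∀ f : SchwartzMap (EuclideanSpace ℝ (Fin d)) ℂ,
        Summable (fun k : Fin d → ℤ => ‖c k * f (latt d k)‖) ∧
        σ f = ∑' k : Fin d → ℤ, c k * f (latt d k)) ∧
      BddAbove (Set.range fun t : EuclideanSpace ℝ (Fin d) =>
        ∑' k : Fin d → ℤ, Real.exp (-Real.pi * ‖latt d k - t‖ ^ 2)) ∧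
      (∀ t s, ‖σ (G t s)‖ ≤
        (⨆ k : Fin d → ℤ, ‖c k‖) *
          ⨆ t' : EuclideanSpace ℝ (Fin d),
            ∑' k : Fin d → ℤ, Real.exp (-Real.pi * ‖latt d k - t'‖ ^ 2)) ∧
      (∀ f : SchwartzMap (EuclideanSpace ℝ (Fin d)) ℂ,
        Disjoint (tsupport ⇑f) (Set.range (latt d)) → σ f = 0) := by
  classical
  have hM0 : (0:ℝ) ≤ M := le_trans (norm_nonneg _) (hc fun _ => 0)
  -- comparison series
  set Q : (Fin d → ℤ) → ℝ := fun k => ∏ i, ((1:ℝ) + ((k i : ℝ))^2)⁻¹ with hQ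
  have hQ0 : ∀ k, 0 ≤ Q k := fun k => Finset.prod_nonneg fun i _ => by positivity
  have hQsum : Summable Q :=
    summable_pi_prod (fun i n => ((1:ℝ) + (n:ℝ)^2)⁻¹) (fun i n => by positivity)
      (fun i => summable_inv_one_add_sq)
  set SB : ℝ := ∑' k, Q k with hSB
  have hSB0 : 0 ≤ SB := tsum_nonneg hQ0
  set P : SchwartzMap (EuclideanSpace ℝ (Fin d)) ℂ → ℝ := fun f =>
    (Finset.Iic (2*d, 0)).sup (schwartzSeminormFamily ℂ (EuclideanSpace ℝ (Fin d)) ℂ) f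
    with hP
  have hP0 : ∀ f, 0 ≤ P f := fun f => apply_nonneg _ f
  have hterm : ∀ f k, ‖c k * f (latt d k)‖ ≤ M * (2^(2*d) * P f) * Q k := by
    intro f k
    rw [norm_mul, mul_assoc]
    refine mul_le_mul (hc k) ?_ (norm_nonneg _) hM0
    have := schwartz_decay d f (latt d k)
    exact this
  have hsum : ∀ f : SchwartzMap (EuclideanSpace ℝ (Fin d)) ℂ,
      Summable (fun k : Fin d → ℤ => ‖c k * f (latt d k)‖) := by
    intro f
    exact Summable.of_nonneg_of_le (fun k => norm_nonneg _) (hterm f)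
      (hQsum.mul_left _)
  have hkey : ∀ f : SchwartzMap (EuclideanSpace ℝ (Fin d)) ℂ,
      (∑' k, ‖c k * f (latt d k)‖) ≤ M * 2^(2*d) * SB * P f := by
    intro f
    calc (∑' k, ‖c k * f (latt d k)‖)
        ≤ ∑' k, M * (2^(2*d) * P f) * Q k :=
          Summable.tsum_le_tsum (hterm f) (hsum f) (hQsum.mul_left _)
      _ = M * (2^(2*d) * P f) * SB := tsum_mul_left
      _ = M * 2^(2*d) * SB * P f := by ring
  set σ : SchwartzMap (EuclideanSpace ℝ (Fin d)) ℂ →L[ℂ] ℂ :=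
    SchwartzMap.mkCLMtoNormedSpace
      (fun f => ∑' k : Fin d → ℤ, c k * f (latt d k))
      (by
        intro f g
        rw [← Summable.tsum_add ((hsum f).of_norm) ((hsum g).of_norm)]
        exact tsum_congr fun k => by simp [mul_add])
      (by
        intro a f
        simp only [SchwartzMap.smul_apply, smul_eq_mul, RingHom.id_apply]
        rw [← tsum_mul_left]
        exact tsum_congr fun k => by ring)
      (⟨Finset.Iic (2*d, 0), M * 2^(2*d) * SB, by positivity, fun f =>
        le_trans (norm_tsum_le_tsum_norm (hsum f)) (hkey f)⟩) with hσ
  have happ : ∀ f, σ f = ∑' k : Fin d → ℤ, c k * f (latt d k) := fun f => rfl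
  refine ⟨σ, fun f => ⟨hsum f, happ f⟩, ?_, ?_, ?_⟩
  · exact ⟨C1 ^ d, by rintro v ⟨t, rfl⟩; exact tsum_gaussE_le d t⟩
  · intro t s
    have hbddc : BddAbove (Set.range fun k => ‖c k‖) :=
      ⟨M, by rintro v ⟨k, rfl⟩; exact hc k⟩
    have ha : ∀ k, ‖c k‖ ≤ ⨆ k, ‖c k‖ := fun k => le_ciSup hbddc k
    have ha0 : (0:ℝ) ≤ ⨆ k, ‖c k‖ := le_trans (norm_nonneg _) (ha fun _ => 0)
    have hbddt : BddAbove (Set.range fun t : EuclideanSpace ℝ (Fin d) =>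
        ∑' k : Fin d → ℤ, Real.exp (-Real.pi * ‖latt d k - t‖ ^ 2)) :=
      ⟨C1 ^ d, by rintro v ⟨t', rfl⟩; exact tsum_gaussE_le d t'⟩
    have hwin : ∀ k, ‖G t s (latt d k)‖ = Real.exp (-Real.pi * ‖latt d k - t‖ ^ 2) := by
      intro k
      rw [hG]
      exact norm_mildWindow d t s (latt d k)
    calc ‖σ (G t s)‖ ≤ ∑' k, ‖c k * G t s (latt d k)‖ := by
          rw [happ]
          exact norm_tsum_le_tsum_norm (hsum _)
      _ ≤ ∑' k, (⨆ k, ‖c k‖) * Real.exp (-Real.pi * ‖latt d k - t‖ ^ 2) := by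
          refine Summable.tsum_le_tsum (fun k => ?_) (hsum _) ((summable_gaussE d t).mul_left _)
          rw [norm_mul, hwin k]
          exact mul_le_mul_of_nonneg_right (ha k) (Real.exp_nonneg _)
      _ = (⨆ k, ‖c k‖) * ∑' k, Real.exp (-Real.pi * ‖latt d k - t‖ ^ 2) := tsum_mul_left
      _ ≤ (⨆ k, ‖c k‖) * ⨆ t' : EuclideanSpace ℝ (Fin d),
            ∑' k : Fin d → ℤ, Real.exp (-Real.pi * ‖latt d k - t'‖ ^ 2) :=
          mul_le_mul_of_nonneg_left (le_ciSup hbddt t) ha0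
  · intro f hdisj
    have hz : ∀ k, f (latt d k) = 0 := by
      intro k
      by_contra h
      exact Set.disjoint_left.mp hdisj (subset_tsupport _ h) ⟨k, rfl⟩
    rw [happ]
    simp [hz]
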